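/- Let δ ≥ 1 and n ≥ δ + 1 with n − δ dividing n, and let G be a graph on n vertices with minimum degree at least δ. Then for every t with 1 ≤ t ≤ n − δ, i_t(G) ≤ (n/(n-δ)) · C(n-δ, t); this upper bound equals the number of independent sets of size t in the complete multipartite graph with n/(n-δ) parts, each of size n − δ. -/

import Mathlib

/-! Double count the pairs `(v, S)` with `S` an independent `t`-set and `v ∈ S`. Removing `v`
from `S` leaves a `(t-1)`-set of non-neighbours of `v`, of which there are at most `n - δ - 1`,
so `t · i_t(G) ≤ n · C(n-δ-1, t-1) = (n/(n-δ)) · C(n-δ, t) · t`. In the complete multipartite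
graph the independent sets of size `t ≥ 1` are the `t`-subsets of single parts. -/

open SimpleGraph

/-- `indepT G t` is the number of independent sets of size `t` in `G`,
i.e. the number of `t`-element vertex subsets spanning no edge. -/
noncomputable def indepT {V : Type*} [Fintype V] (G : SimpleGraph V) (t : ℕ) : ℕ :=
  Nat.card {s : Finset V // s.card = t ∧ ∀ u ∈ s, ∀ v ∈ s, ¬ G.Adj u v}

/-- `indepAll G` is the total number of independent sets in `G` (including `∅`). -/
noncomputable def indepAll {V : Type*} [Fintype V] (G : SimpleGraph V) : ℕ :=
  Nat.card {s : Finset V // ∀ u ∈ s, ∀ v ∈ s, ¬ G.Adj u v}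

/-- The degree of a vertex, as the cardinality of its neighbour set. -/
noncomputable def gdeg {V : Type*} (G : SimpleGraph V) (v : V) : ℕ :=
  (G.neighborSet v).ncard

open Finset

lemma Nat.choose_mul_eq_mul_choose_pred (s : ℕ) {t : ℕ} (ht : 1 ≤ t) :
    s.choose t * t = s * (s - 1).choose (t - 1) := by
  obtain ⟨r, rfl⟩ := Nat.exists_eq_add_of_le' ht
  rcases s with _ | m
  · simp
  · simpa using (Nat.add_one_mul_choose_eq m r).symm

namespace SimpleGraph

variable {V : Type*} [Fintype V]

lemma indepT_eq_card_indepSetFinset [DecidableEq V] (G : SimpleGraph V) [DecidableRel G.Adj]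
    (t : ℕ) : indepT G t = #(G.indepSetFinset t) := by
  rw [indepT, Nat.card_eq_fintype_card, Fintype.card_subtype]
  congr 1
  ext S
  simp only [mem_filter, mem_univ, true_and, mem_indepSetFinset_iff, isNIndepSet_iff,
    isIndepSet_iff, and_comm]
  refine and_congr_right fun _ => ⟨fun h u hu v hv _ => h u hu v hv, fun h u hu v hv => ?_⟩
  rcases eq_or_ne u v with rfl | huv
  exacts [G.loopless.irrefl u, h hu hv huv]

lemma gdeg_eq_degree (G : SimpleGraph V) [DecidableRel G.Adj] (v : V) :
    gdeg G v = G.degree v := by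
  rw [gdeg, Set.ncard_eq_toFinset_card', ← card_neighborSet_eq_degree, Set.toFinset_card]

variable [DecidableEq V] (G : SimpleGraph V) [DecidableRel G.Adj]

lemma card_filter_mem_indepSetFinset_le (t : ℕ) (v : V) :
    #{S ∈ G.indepSetFinset t | v ∈ S} ≤ (Gᶜ.degree v).choose (t - 1) := by
  rw [← card_neighborFinset_eq_degree, ← card_powersetCard]
  refine card_le_card_of_injOn (·.erase v) ?_ ?_
  · intro S hS
    simp only [coe_filter, mem_indepSetFinset_iff, Set.mem_ofPred_eq] at hS
    obtain ⟨⟨hind, hcard⟩, hv⟩ := hS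
    refine mem_powersetCard.2 ⟨fun u hu => ?_, by rw [card_erase_of_mem hv, hcard]⟩
    obtain ⟨huv, hu⟩ := mem_erase.1 hu
    exact (mem_neighborFinset _ _ _).2 ((compl_adj G v u).2 ⟨huv.symm, hind hv hu huv.symm⟩)
  · intro S hS T hT hST
    simp only [coe_filter, Set.mem_ofPred_eq] at hS hT
    rw [← insert_erase hS.2, ← insert_erase hT.2]
    exact congrArg (insert v) hST

lemma card_indepSetFinset_mul_le {δ : ℕ} (hmin : ∀ v, δ ≤ G.degree v) (t : ℕ) :
    #(G.indepSetFinset t) * t ≤ Fintype.card V * (Fintype.card V - δ - 1).choose (t - 1) := by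
  have hsum : ∑ S ∈ G.indepSetFinset t, #S = #(G.indepSetFinset t) * t :=
    sum_const_nat fun S hS => ((mem_indepSetFinset_iff.1 hS).card_eq)
  refine hsum ▸ sum_card_le fun v => (G.card_filter_mem_indepSetFinset_le t v).trans ?_
  refine Nat.choose_le_choose _ ?_
  rw [degree_compl]
  have := hmin v
  omega

end SimpleGraph

theorem indepT_le_of_le_gdeg {V : Type*} [Fintype V] (G : SimpleGraph V) {δ t : ℕ}
    (hdvd : (Fintype.card V - δ) ∣ Fintype.card V) (hmin : ∀ v, δ ≤ gdeg G v) (ht : 1 ≤ t) :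
    indepT G t ≤ Fintype.card V / (Fintype.card V - δ) * (Fintype.card V - δ).choose t := by
  classical
  set s := Fintype.card V - δ
  have hdeg : ∀ v, δ ≤ G.degree v := fun v => G.gdeg_eq_degree v ▸ hmin v
  refine Nat.le_of_mul_le_mul_right ?_ ht
  calc indepT G t * t
      ≤ Fintype.card V * (s - 1).choose (t - 1) := by
        rw [G.indepT_eq_card_indepSetFinset]
        exact G.card_indepSetFinset_mul_le hdeg t
    _ = Fintype.card V / s * s.choose t * t := by
        rw [mul_assoc, s.choose_mul_eq_mul_choose_pred ht, ← mul_assoc, Nat.div_mul_cancel hdvd]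

theorem indepT_completeMultipartiteGraph {ι : Type*} [Fintype ι] (W : ι → Type*)
    [∀ i, Fintype (W i)] {t : ℕ} (ht : 1 ≤ t) :
    indepT (completeMultipartiteGraph W) t = ∑ i, (Fintype.card (W i)).choose t := by
  classical
  let part (i : ι) : Finset (Σ i, W i) := ({i} : Finset ι).sigma fun _ => univ
  have mem_part (x : Σ i, W i) (i : ι) : x ∈ part i ↔ x.1 = i := by simp [part]
  have hparts : (completeMultipartiteGraph W).indepSetFinset t =
      univ.biUnion fun i => (part i).powersetCard t := by
    ext S
    simp only [mem_indepSetFinset_iff, isNIndepSet_iff, mem_biUnion, mem_univ, true_and,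
      mem_powersetCard]
    constructor
    · rintro ⟨hind, hcard⟩
      obtain ⟨w, hw⟩ := card_pos.1 (hcard ▸ ht)
      refine ⟨w.1, fun x hx => (mem_part x w.1).2 ?_, hcard⟩
      by_contra hxw
      exact hind hx hw (fun h => hxw (h ▸ rfl)) hxw
    · rintro ⟨i, hsub, hcard⟩
      refine ⟨fun x hx y hy _ hxy => hxy ?_, hcard⟩
      rw [(mem_part x i).1 (hsub hx), (mem_part y i).1 (hsub hy)]
  rw [indepT_eq_card_indepSetFinset, hparts, card_biUnion]
  · simp [part]
  · intro i _ j _ hij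
    refine disjoint_left.2 fun S hSi hSj => ?_
    obtain ⟨hi, hcard⟩ := mem_powersetCard.1 hSi
    obtain ⟨x, hx⟩ := card_pos.1 (hcard ▸ ht)
    have hxj := (mem_powersetCard.1 hSj).1 hx
    exact hij (((mem_part x i).1 (hi hx)).symm.trans ((mem_part x j).1 hxj))

theorem stmt_19_general {V : Type*} [Fintype V] (G : SimpleGraph V) (δ n : ℕ)
    (hn : Fintype.card V = n) (hdvd : (n - δ) ∣ n)
    (hmin : ∀ v, δ ≤ gdeg G v) (t : ℕ) (ht1 : 1 ≤ t) :
    indepT G t ≤ n / (n - δ) * (n - δ).choose t ∧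
    n / (n - δ) * (n - δ).choose t =
      indepT (completeMultipartiteGraph fun _ : Fin (n / (n - δ)) => Fin (n - δ)) t := by
  subst hn
  refine ⟨indepT_le_of_le_gdeg G hdvd hmin ht1, ?_⟩
  rw [indepT_completeMultipartiteGraph _ ht1]
  simp

/-- For `δ ≥ 1`, `n ≥ δ+1` with `(n-δ) ∣ n`, every `n`-vertex graph of minimum degree at
least `δ` satisfies, for all `1 ≤ t ≤ n-δ`, `i_t(G) ≤ (n/(n-δ))·C(n-δ,t)`; and this bound
is the number of independent sets of size `t` in the complete multipartite graph with
`n/(n-δ)` parts each of size `n-δ`. -/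
theorem stmt_19 {V : Type*} [Fintype V] (G : SimpleGraph V) (δ n : ℕ)
    (hδ : 1 ≤ δ) (hn : Fintype.card V = n) (hn1 : δ + 1 ≤ n) (hdvd : (n - δ) ∣ n)
    (hmin : ∀ v, δ ≤ gdeg G v) (t : ℕ) (ht1 : 1 ≤ t) (ht2 : t ≤ n - δ) :
    indepT G t ≤ n / (n - δ) * (n - δ).choose t ∧
    n / (n - δ) * (n - δ).choose t =
      indepT (completeMultipartiteGraph fun _ : Fin (n / (n - δ)) => Fin (n - δ)) t :=
  stmt_19_general G δ n hn hdvd hmin t ht1
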